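/- arXiv:2207.05396 — 3 statements merged into one kernel-verified Lean document; each statement's English description precedes it below -/
import Mathlib

section
/- Let B be a primitive collection of nonzero proper ideals of O_K and let (S_i)_{i≥1} be a saturated filtration of B by finite nonempty subcollections. Then O_K \ ⋃_s Per(η, s), where the union is taken over all nonzero ideals s of O_K, equals M_D ∩ F_B, which in turn equals O_K \ ⋃_{i≥1} Per(η, lcm(S_i)); here M_D = ⋃_{d∈D} d. -/
open Set Filter Topology NumberField

namespace BFree

variable (K : Type*) [Field K] [NumberField K]

/-- The set of multiples of a collection `B` of ideals of `𝓞 K`. -/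
def MB (B : Set (Ideal (𝓞 K))) : Set (𝓞 K) := {g | ∃ b ∈ B, g ∈ b}

open Classical in
/-- The indicator function `η` of the `B`-free elements. -/
noncomputable def eta (B : Set (Ideal (𝓞 K))) : 𝓞 K → Bool :=
  fun g => if g ∈ MB K B then false else true

/-- The shift action of `𝓞 K` on `{0,1}^{𝓞 K}`. -/
def shift (g : 𝓞 K) (x : 𝓞 K → Bool) : 𝓞 K → Bool := fun h => x (h + g)

/-- The orbit of a point under the shift action. -/
def orbit (x : 𝓞 K → Bool) : Set (𝓞 K → Bool) := {y | ∃ g : 𝓞 K, y = shift K g x}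

/-- The orbit closure `X_x` of a point. -/
def orbitClosure (x : 𝓞 K → Bool) : Set (𝓞 K → Bool) := closure (orbit K x)

/-- The set of `s`-periodic positions of `x`. -/
def Per (x : 𝓞 K → Bool) (s : Ideal (𝓞 K)) : Set (𝓞 K) :=
  {g | ∀ t ∈ s, x (g + t) = x g}

/-- `x` is an `𝓞 K`-Toeplitz array. -/
def IsToeplitz (x : 𝓞 K → Bool) : Prop :=
  ∀ g : 𝓞 K, ∃ s : Ideal (𝓞 K), s ≠ ⊥ ∧ g ∈ Per K x s

/-- A collection of ideals is pairwise coprime. -/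
def PairwiseCoprime (C : Set (Ideal (𝓞 K))) : Prop :=
  ∀ c ∈ C, ∀ c' ∈ C, c ≠ c' → c ⊔ c' = ⊤

/-- The collection `D` of nonzero ideals `d` such that `d·C ⊆ B` for some infinite
pairwise coprime collection `C` of nonzero proper ideals. -/
def Dset (B : Set (Ideal (𝓞 K))) : Set (Ideal (𝓞 K)) :=
  {d | d ≠ ⊥ ∧ ∃ C : Set (Ideal (𝓞 K)), C.Infinite ∧ (∀ c ∈ C, c ≠ ⊥ ∧ c ≠ ⊤) ∧
    PairwiseCoprime K C ∧ ∀ c ∈ C, d * c ∈ B}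

/-- The primitive part of a collection of ideals. -/
def primPart (A : Set (Ideal (𝓞 K))) : Set (Ideal (𝓞 K)) :=
  {a | a ∈ A ∧ ¬ ∃ a' ∈ A, a < a'}

/-- `B* = (B ∪ D)^prim`. -/
def Bstar (B : Set (Ideal (𝓞 K))) : Set (Ideal (𝓞 K)) :=
  primPart K (B ∪ Dset K B)

/-- `η*`, the indicator function of the `B*`-free elements. -/
noncomputable def etaStar (B : Set (Ideal (𝓞 K))) : 𝓞 K → Bool :=
  eta K (Bstar K B)

/-- A set is invariant under all shifts. -/
def IsInvariant (M : Set (𝓞 K → Bool)) : Prop :=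
  ∀ g : 𝓞 K, ∀ x ∈ M, shift K g x ∈ M

/-- A minimal subset of the full shift: nonempty, closed, invariant, and the orbit of
each of its points is dense in it. -/
def IsMinimalSubset (M : Set (𝓞 K → Bool)) : Prop :=
  M.Nonempty ∧ IsClosed M ∧ IsInvariant K M ∧ ∀ x ∈ M, M ⊆ closure (orbit K x)

/-- `B` is primitive: no ideal of `B` is contained in another one. -/
def Primitive (B : Set (Ideal (𝓞 K))) : Prop :=
  ∀ b ∈ B, ∀ b' ∈ B, b ≤ b' → b = b'

end BFree

/-!
For a `B`-free `g`, being `s`-periodic for `η` means `g ∉ b ⊔ s` for every `b ∈ B`.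
If `g ∈ d` with `d ∈ D`, a nonzero `s` is coprime to some `c` with `d * c ∈ B`, so
`g ∈ d = d * (c ⊔ s) ≤ d * c ⊔ s` and `g` is not `s`-periodic. Conversely, if `g` is not
`lcm (S i)`-periodic for any `i`, pick `b i ∈ B` with `g ∈ b i ⊔ lcm (S i)`. Only finitely many
ideals contain `g ≠ 0`, so `b i ⊔ lcm (S i) = d` for infinitely many `i`, and along a
subsequence in which each earlier `b i` belongs to the later `S j` one gets `b i = d * c i` with
`d ≤ d * (c i ⊔ c j)`; cancelling `d` makes the `c i` pairwise coprime, so `d ∈ D`.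
-/

theorem Set.Infinite.exists_extraction_forall_lt_of_eventually {I : Set ℕ} (hI : I.Infinite)
    {r : ℕ → ℕ → Prop} (hr : ∀ i, ∀ᶠ j in atTop, r i j) :
    ∃ φ : ℕ → ℕ, StrictMono φ ∧ (∀ n, φ n ∈ I) ∧ ∀ m n, m < n → r (φ m) (φ n) := by
  -- Unlike `r`, the relation `r'` is transitive, so Ramsey's theorem for transitive colourings
  -- applies to it.
  let r' : ℕ → ℕ → Prop := fun i j => i < j ∧ ∀ k ≥ j, r i k
  have : IsTrans ℕ r' := ⟨fun i j k ⟨hij, hj⟩ ⟨hjk, hk⟩ =>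
    ⟨hij.trans hjk, fun l hl => hj l (hjk.le.trans hl)⟩⟩
  have he := Nat.nth_strictMono hI
  obtain ⟨g, hg | hg⟩ := exists_increasing_or_nonincreasing_subseq r' (Nat.nth (· ∈ I))
  · exact ⟨_, he.comp g.strictMono, fun n => Nat.nth_mem_of_infinite hI _,
      fun m n hmn => (hg m n hmn).2 _ le_rfl⟩
  · obtain ⟨N, hN⟩ := eventually_atTop.1 (hr (Nat.nth (· ∈ I) (g 0)))
    set n := max N (Nat.nth (· ∈ I) (g 0) + 1) + 1
    have hn : n ≤ Nat.nth (· ∈ I) (g n) := (he.comp g.strictMono).id_le n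
    exact (hg 0 n (by omega) ⟨by omega, fun k hk => hN k (by omega)⟩).elim

theorem Ideal.sInf_ne_bot_of_finite {R : Type*} [CommRing R] [IsDomain R] {S : Set (Ideal R)}
    (hS : S.Finite) (h : ∀ b ∈ S, b ≠ ⊥) : sInf S ≠ ⊥ := by
  induction S, hS using Set.Finite.induction_on with
  | empty => simp
  | @insert a s _ _ ih =>
    rw [sInf_insert]
    exact inf_ne_bot_of_ne_bot (h a (mem_insert _ _))
      (ih fun b hb => h b (mem_insert_of_mem _ hb))

section DedekindDomain

variable {R : Type*} [CommRing R] [IsDedekindDomain R]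

theorem Ideal.finite_setOf_le_of_ne_bot {s : Ideal R} (hs : s ≠ ⊥) :
    {I : Ideal R | s ≤ I}.Finite := by
  have : Fintype {I : Ideal R // I ∣ s} := UniqueFactorizationMonoid.fintypeSubtypeDvd s hs
  have : Finite {I : Ideal R | I ∣ s} := Finite.of_fintype {I : Ideal R // I ∣ s}
  simpa only [← Ideal.dvd_iff_le] using toFinite {I : Ideal R | I ∣ s}

theorem Ideal.finite_setOf_mem {g : R} (hg : g ≠ 0) : {I : Ideal R | g ∈ I}.Finite := by
  simpa only [Ideal.span_singleton_le_iff_mem] using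
    finite_setOf_le_of_ne_bot (Ideal.span_singleton_eq_bot.not.2 hg)

theorem Ideal.exists_sup_eq_top_of_pairwise {C : Set (Ideal R)} (hC : C.Infinite)
    (hcop : C.Pairwise (· ⊔ · = ⊤)) {s : Ideal R} (hs : s ≠ ⊥) : ∃ c ∈ C, c ⊔ s = ⊤ := by
  by_contra! h
  choose! p hpmax hple using fun c hc => Ideal.exists_le_maximal _ (h c hc)
  -- distinct members of `C` lie in distinct maximal ideals, all of them above `s`
  have hinj : C.InjOn p := by
    intro c hc c' hc' hpe
    by_contra hne
    have := sup_le (le_sup_left.trans (hple c hc)) (hpe ▸ le_sup_left.trans (hple c' hc'))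
    exact (hpmax c hc).ne_top (top_le_iff.1 (hcop hc hc' hne ▸ this))
  exact hC (((finite_setOf_le_of_ne_bot hs).subset
    (image_subset_iff.2 fun c hc => le_sup_right.trans (hple c hc))).of_finite_image hinj)

theorem Ideal.sup_eq_top_of_le_mul_sup {d c c' : Ideal R} (hd : d ≠ ⊥)
    (h : d ≤ d * c ⊔ d * c') : c ⊔ c' = ⊤ := by
  rw [← Ideal.mul_sup, ← Ideal.dvd_iff_le, ← mul_one d, mul_assoc, one_mul,
    mul_dvd_mul_iff_left hd, Ideal.dvd_iff_le, Ideal.one_eq_top] at h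
  exact top_le_iff.1 h

end DedekindDomain

namespace BFree

section

variable {K : Type*} [Field K] {B : Set (Ideal (𝓞 K))} {S : ℕ → Set (Ideal (𝓞 K))}

theorem mem_per_iff {x : 𝓞 K → Bool} {s : Ideal (𝓞 K)} {g : 𝓞 K} :
    g ∈ Per K x s ↔ ∀ t ∈ s, x (g + t) = x g :=
  Iff.rfl

@[simp]
theorem eta_eq_false_iff {g : 𝓞 K} : eta K B g = false ↔ g ∈ MB K B := by
  simp [eta]

@[simp]
theorem eta_eq_true_iff {g : 𝓞 K} : eta K B g = true ↔ g ∉ MB K B := by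
  simp [eta]

theorem mem_per_eta_of_mem {b s : Ideal (𝓞 K)} {g : 𝓞 K} (hb : b ∈ B) (hg : g ∈ b)
    (hs : s ≤ b) : g ∈ Per K (eta K B) s := fun t ht => by
  rw [eta_eq_false_iff.2 ⟨b, hb, hg⟩, eta_eq_false_iff.2 ⟨b, hb, b.add_mem hg (hs ht)⟩]

theorem mem_per_eta_iff {s : Ideal (𝓞 K)} {g : 𝓞 K} (hg : g ∉ MB K B) :
    g ∈ Per K (eta K B) s ↔ ∀ b ∈ B, g ∉ b ⊔ s := by
  simp only [mem_per_iff, eta_eq_true_iff.2 hg, eta_eq_true_iff]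
  constructor
  · rintro h b hb hgbs
    obtain ⟨u, hu, v, hv, rfl⟩ := Submodule.mem_sup.1 hgbs
    exact h (-v) (neg_mem hv) ⟨b, hb, by simpa using hu⟩
  · rintro h t ht ⟨b, hb, hgt⟩
    have := (b ⊔ s).sub_mem (Submodule.mem_sup_left hgt) (Submodule.mem_sup_right ht)
    exact h b hb (by simpa using this)

theorem notMem_per_eta_of_mem_mb_dset [NumberField K] {s : Ideal (𝓞 K)} {g : 𝓞 K}
    (hg : g ∉ MB K B) (hgD : g ∈ MB K (Dset K B)) (hs : s ≠ ⊥) : g ∉ Per K (eta K B) s := by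
  obtain ⟨d, ⟨-, C, hC, -, hCcop, hCB⟩, hgd⟩ := hgD
  obtain ⟨c, hc, hcs⟩ := Ideal.exists_sup_eq_top_of_pairwise hC hCcop hs
  have hd : d ≤ d * c ⊔ s := calc
    d = d * c ⊔ d * s := by rw [← Ideal.mul_sup, hcs, Ideal.mul_top]
    _ ≤ d * c ⊔ s := sup_le_sup_left Ideal.mul_le_right _
  rw [mem_per_eta_iff hg]
  exact fun h => h _ (hCB c hc) (hd hgd)

theorem mb_subset_iUnion_per_eta (hunion : ⋃ i, S i = B) :
    MB K B ⊆ ⋃ i, Per K (eta K B) (sInf (S i)) := by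
  rintro g ⟨b, hb, hgb⟩
  obtain ⟨i, hi⟩ := mem_iUnion.1 (hunion ▸ hb)
  exact mem_iUnion.2 ⟨i, mem_per_eta_of_mem hb hgb (sInf_le hi)⟩

theorem mem_dset_of_sup_eq [NumberField K] (hB : ∀ b ∈ B, b ≠ ⊥) (hmono : Monotone S)
    (hunion : ⋃ i, S i = B) {d : Ideal (𝓞 K)} (hd : d ≠ ⊥) (hdB : d ∉ B)
    {b : ℕ → Ideal (𝓞 K)} (hb : ∀ i, b i ∈ B)
    (hI : {i | b i ⊔ sInf (S i) = d}.Infinite) : d ∈ Dset K B := by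
  have hev : ∀ i, ∀ᶠ j in atTop, b i ∈ S j := fun i => by
    obtain ⟨k, hk⟩ := mem_iUnion.1 (hunion ▸ hb i)
    exact eventually_atTop.2 ⟨k, fun j hj => hmono hj hk⟩
  obtain ⟨φ, -, hφI, hφS⟩ := hI.exists_extraction_forall_lt_of_eventually hev
  choose c hc using fun n => Ideal.dvd_iff_le.2 ((hφI n).symm ▸ le_sup_left : b (φ n) ≤ d)
  have hc_ne_top : ∀ n, c n ≠ ⊤ := fun n h => hdB <| by
    simpa only [hc n, h, Ideal.mul_top] using hb (φ n)
  have hcop_lt : ∀ m n, m < n → c n ⊔ c m = ⊤ := fun m n hmn =>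
    Ideal.sup_eq_top_of_le_mul_sup hd <| calc
      d = b (φ n) ⊔ sInf (S (φ n)) := (hφI n).symm
      _ ≤ d * c n ⊔ d * c m := sup_le_sup (hc n).le ((sInf_le (hφS m n hmn)).trans (hc m).le)
  have hcop : ∀ m n, m ≠ n → c m ⊔ c n = ⊤ := fun m n hmn =>
    hmn.lt_or_gt.elim (fun h => sup_comm (c n) (c m) ▸ hcop_lt m n h) (hcop_lt n m)
  have hinj : Function.Injective c := fun m n hmn => by_contra fun hne =>
    hc_ne_top m (by simpa [hmn] using hcop m n hne)
  refine ⟨hd, range c, infinite_range_of_injective hinj, ?_, ?_, ?_⟩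
  · rintro _ ⟨n, rfl⟩
    exact ⟨fun h => hB _ (hb (φ n)) (by rw [hc n, h, Ideal.mul_bot]), hc_ne_top n⟩
  · rintro _ ⟨m, rfl⟩ _ ⟨n, rfl⟩ hne
    exact hcop m n (ne_of_apply_ne c hne)
  · rintro _ ⟨n, rfl⟩
    exact hc n ▸ hb (φ n)

theorem mem_mb_dset_of_forall_notMem_per_eta [NumberField K] (hB : ∀ b ∈ B, b ≠ ⊥)
    (hmono : Monotone S) (hunion : ⋃ i, S i = B) {g : 𝓞 K} (hg : g ∉ MB K B)
    (hper : ∀ i, g ∉ Per K (eta K B) (sInf (S i))) : g ∈ MB K (Dset K B) := by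
  simp only [mem_per_eta_iff hg, not_forall, not_not] at hper
  choose b hb hgb using hper
  have hg0 : g ≠ 0 := fun h => hg ⟨b 0, hb 0, h ▸ zero_mem _⟩
  have := (Ideal.finite_setOf_mem (R := 𝓞 K) hg0).to_subtype
  let f : ℕ → {I : Ideal (𝓞 K) | g ∈ I} := fun i => ⟨b i ⊔ sInf (S i), hgb i⟩
  obtain ⟨⟨d, hgd⟩, hfiber⟩ := Finite.exists_infinite_fiber f
  refine ⟨d, mem_dset_of_sup_eq hB hmono hunion ?_ (fun hdB => hg ⟨d, hdB, hgd⟩) hb ?_, hgd⟩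
  · rintro rfl
    exact hg0 (Ideal.mem_bot.1 hgd)
  · convert infinite_coe_iff.1 hfiber using 1
    ext i
    simp [f, Subtype.ext_iff]

end

theorem nonperiodic_positions_general
    (K : Type*) [Field K] [NumberField K]
    (B : Set (Ideal (𝓞 K)))
    (hB : ∀ b ∈ B, b ≠ ⊥ ∧ b ≠ ⊤)
    (S : ℕ → Set (Ideal (𝓞 K)))
    (hfin : ∀ i, (S i).Finite)
    (hmono : Monotone S) (hunion : (⋃ i, S i) = B) :
    (⋃ s ∈ {s : Ideal (𝓞 K) | s ≠ ⊥}, Per K (eta K B) s)ᶜ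
      = MB K (Dset K B) ∩ (MB K B)ᶜ ∧
    MB K (Dset K B) ∩ (MB K B)ᶜ
      = (⋃ i, Per K (eta K B) (sInf (S i)))ᶜ := by
  have hB' : ∀ b ∈ B, b ≠ ⊥ := fun b hb => (hB b hb).1
  set P := ⋃ s ∈ {s : Ideal (𝓞 K) | s ≠ ⊥}, Per K (eta K B) s
  set Q := ⋃ i, Per K (eta K B) (sInf (S i))
  set M := MB K (Dset K B) ∩ (MB K B)ᶜ
  have hQP : Q ⊆ P := iUnion_subset fun i => subset_biUnion_of_mem <|
    Ideal.sInf_ne_bot_of_finite (hfin i) fun b hb => hB' b (hunion ▸ subset_iUnion S i hb)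
  have hMP : M ⊆ Pᶜ := by
    rintro g ⟨hgD, hg⟩ hgP
    obtain ⟨s, hs, hgs⟩ := mem_iUnion₂.1 hgP
    exact notMem_per_eta_of_mem_mb_dset hg hgD hs hgs
  have hQM : Qᶜ ⊆ M := by
    intro g hgQ
    have hg : g ∉ MB K B := fun h => hgQ (mb_subset_iUnion_per_eta hunion h)
    exact ⟨mem_mb_dset_of_forall_notMem_per_eta hB' hmono hunion hg
      fun i hi => hgQ (mem_iUnion_of_mem i hi), hg⟩
  have hPQ : Pᶜ ⊆ Qᶜ := compl_subset_compl.2 hQP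
  exact ⟨(hPQ.trans hQM).antisymm hMP, (hMP.trans hPQ).antisymm hQM⟩

/-- **Proposition.** Description of the non-periodic positions of `η`: they are exactly
`M_D ∩ F_B`, and also exactly the positions that are non-periodic along the filtration. -/
theorem nonperiodic_positions
    (K : Type*) [Field K] [NumberField K]
    (B : Set (Ideal (𝓞 K)))
    (hB : ∀ b ∈ B, b ≠ ⊥ ∧ b ≠ ⊤)
    (hprim : Primitive K B)
    (S : ℕ → Set (Ideal (𝓞 K)))
    (hfin : ∀ i, (S i).Finite) (hne : ∀ i, (S i).Nonempty) (hsub : ∀ i, S i ⊆ B)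
    (hmono : Monotone S) (hunion : (⋃ i, S i) = B)
    (hsat : ∀ i, ((fun b => b ⊔ sInf (S i)) '' B) ∩ B = S i) :
    (⋃ s ∈ {s : Ideal (𝓞 K) | s ≠ ⊥}, Per K (eta K B) s)ᶜ
      = MB K (Dset K B) ∩ (MB K B)ᶜ ∧
    MB K (Dset K B) ∩ (MB K B)ᶜ
      = (⋃ i, Per K (eta K B) (sInf (S i)))ᶜ :=
  nonperiodic_positions_general K B hB S hfin hmono hunion

end BFree
end

section
/- Let G be a finitely generated abelian group, A a nonempty finite alphabet, x ∈ A^G, and let Γ ≤ G be a subgroup of finite index with Per(x, Γ) ≠ ∅. Then the following are equivalent: (1) Γ is a group generated by essential periods of x, i.e., for every subgroup Γ' ≤ G, Per(x, Γ) ⊆ Per(x, Γ') implies Γ' ⊆ Γ; (2) Γ is an essential group of periods of x, i.e., for every g ∈ G, if Per(x, Γ, a) ⊆ Per(x, Γ, a) − g for all a ∈ A, then g ∈ Γ. -/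
/-- `Per(x, Γ, a) = {h ∈ G : x(h + γ) = a for all γ ∈ Γ}`. -/
def PerGrp {G A : Type*} [AddCommGroup G] (x : G → A) (Γ : AddSubgroup G) (a : A) :
    Set G :=
  {h : G | ∀ γ ∈ Γ, x (h + γ) = a}

/-!
Write `Stab(x, Γ)` for the monoid of translations `g` with `Per(x, Γ, a) + g ⊆ Per(x, Γ, a)` for
every `a`. Condition (2) says `Stab(x, Γ) ⊆ Γ`, and `Per(x, Γ) ⊆ Per(x, Γ')` holds exactly when
`Γ' ⊆ Stab(x, Γ)`, so condition (1) says that every subgroup inside `Stab(x, Γ)` lies in `Γ`.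
These agree because `Stab(x, Γ)` contains `Γ`, which has finite index, and a submonoid containing a
finite-index subgroup is itself a subgroup: `-g = (n - 1) • g - n • g` with `n • g ∈ Γ`.
-/

section

variable {G A : Type*} [AddCommGroup G]

lemma AddSubmonoid.neg_mem_of_index_ne_zero {M : AddSubmonoid G} {Γ : AddSubgroup G}
    (hΓ : Γ.index ≠ 0) (hΓM : Γ.toAddSubmonoid ≤ M) {g : G} (hg : g ∈ M) : -g ∈ M := by
  obtain ⟨k, hk⟩ := Nat.exists_eq_succ_of_ne_zero hΓ
  have hmul : (k + 1) • g ∈ Γ := by simpa [hk] using Γ.nsmul_index_mem g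
  have hneg : -g = k • g + -((k + 1) • g) := by rw [succ_nsmul]; abel
  rw [hneg]
  exact M.add_mem (M.nsmul_mem hg k) (hΓM (Γ.neg_mem hmul))

lemma Set.subset_image_sub_const_iff {s : Set G} {g : G} :
    s ⊆ (fun p => p - g) '' s ↔ ∀ h ∈ s, h + g ∈ s := by
  refine forall₂_congr fun h _ => ⟨?_, fun hs => ⟨h + g, hs, add_sub_cancel_right h g⟩⟩
  rintro ⟨p, hp, rfl⟩
  rwa [sub_add_cancel]

namespace PerGrp

variable {x : G → A} {Γ : AddSubgroup G} {a : A} {h : G}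

lemma apply_eq (hh : h ∈ PerGrp x Γ a) : x h = a := by
  simpa using hh 0 Γ.zero_mem

lemma add_mem (hh : h ∈ PerGrp x Γ a) {γ : G} (hγ : γ ∈ Γ) : h + γ ∈ PerGrp x Γ a :=
  fun δ hδ => add_assoc h γ δ ▸ hh _ (Γ.add_mem hγ hδ)

variable (x Γ) in
def stab : AddSubmonoid G where
  carrier := {g | ∀ a, ∀ h ∈ PerGrp x Γ a, h + g ∈ PerGrp x Γ a}
  zero_mem' _ _ hh := by rwa [add_zero]
  add_mem' hg₁ hg₂ a h hh := add_assoc h _ _ ▸ hg₂ a _ (hg₁ a h hh)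

lemma le_stab : Γ.toAddSubmonoid ≤ stab x Γ :=
  fun _ hγ _ _ hh => add_mem hh hγ

lemma iUnion_subset_iUnion_iff {Γ' : AddSubgroup G} :
    (⋃ a, PerGrp x Γ a) ⊆ (⋃ a, PerGrp x Γ' a) ↔ Γ'.toAddSubmonoid ≤ stab x Γ := by
  simp only [Set.iUnion_subset_iff]
  constructor
  · intro hsub g hg a h hh γ hγ
    obtain ⟨b, hb⟩ := Set.mem_iUnion.mp (hsub a (add_mem hh hγ))
    calc x (h + g + γ) = x (h + γ + g) := by rw [add_right_comm]
      _ = b := hb g hg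
      _ = a := (apply_eq hb).symm.trans (apply_eq (add_mem hh hγ))
  · intro hle a h hh
    exact Set.mem_iUnion.mpr ⟨a, fun g hg => apply_eq (hle hg a h hh)⟩

end PerGrp

end

theorem essential_periods_equiv_general
    {G : Type*} [AddCommGroup G]
    {A : Type*}
    (x : G → A) (Γ : AddSubgroup G) (hΓ : Γ.index ≠ 0) :
    ((∀ Γ' : AddSubgroup G,
        (⋃ a : A, PerGrp x Γ a) ⊆ (⋃ a : A, PerGrp x Γ' a) → Γ' ≤ Γ)
      ↔
     (∀ g : G, (∀ a : A, PerGrp x Γ a ⊆ (fun p => p - g) '' PerGrp x Γ a) → g ∈ Γ)) := by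
  simp only [Set.subset_image_sub_const_iff, PerGrp.iUnion_subset_iUnion_iff]
  constructor
  · intro hgen g hg
    let S : AddSubgroup G :=
      { PerGrp.stab x Γ with
        neg_mem' := AddSubmonoid.neg_mem_of_index_ne_zero hΓ PerGrp.le_stab }
    exact hgen S le_rfl hg
  · exact fun hess Γ' hle g hg => hess g (hle hg)

/-- **Corollary.** For a finitely generated abelian group, "group generated by essential
periods" and "essential group of periods" are the same notion. -/
theorem essential_periods_equiv
    {G : Type*} [AddCommGroup G] [AddGroup.FG G]
    {A : Type*} [Fintype A] [Nonempty A]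
    (x : G → A) (Γ : AddSubgroup G) (hΓ : Γ.index ≠ 0)
    (hper : (⋃ a : A, PerGrp x Γ a).Nonempty) :
    ((∀ Γ' : AddSubgroup G,
        (⋃ a : A, PerGrp x Γ a) ⊆ (⋃ a : A, PerGrp x Γ' a) → Γ' ≤ Γ)
      ↔
     (∀ g : G, (∀ a : A, PerGrp x Γ a ⊆ (fun p => p - g) '' PerGrp x Γ a) → g ∈ Γ)) :=
  essential_periods_equiv_general x Γ hΓ
end

section
/- Let B ⊆ {2,3,…} be primitive and let (S_i)_{i≥1} be a saturated filtration of B by finite nonempty subsets. Then ℤ \ ⋃_{i≥1} Per(η, lcm(S_i)) = M_D ∩ F_B = ℤ \ ⋃_{s≥1} Per(η, s). -/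
namespace BFreeZ

/-- The set of multiples `M_B = ⋃_{b ∈ B} bℤ` of `B ⊆ ℕ`. -/
def MBZ (B : Set ℕ) : Set ℤ := {n : ℤ | ∃ b ∈ B, (b : ℤ) ∣ n}

open Classical in
/-- The indicator function `η` of the `B`-free integers. -/
noncomputable def etaZ (B : Set ℕ) : ℤ → Bool :=
  fun n => if n ∈ MBZ B then false else true

/-- `Per(x, s) = {n ∈ ℤ : x(n + ks) = x(n) for all k ∈ ℤ}`. -/
def PerZ {A : Type*} (x : ℤ → A) (s : ℕ) : Set ℤ :=
  {n : ℤ | ∀ k : ℤ, x (n + k * s) = x n}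

/-- `x` is a Toeplitz sequence. -/
def IsToeplitzZ {A : Type*} (x : ℤ → A) : Prop :=
  ∀ n : ℤ, ∃ s : ℕ, 0 < s ∧ n ∈ PerZ x s

/-- `B ⊆ ℕ` is primitive: no element divides another one. -/
def PrimitiveZ (B : Set ℕ) : Prop :=
  ∀ b ∈ B, ∀ b' ∈ B, b ≠ b' → ¬ b ∣ b'

/-- The set `D` of `d ∈ ℕ` such that `d·C ⊆ B` for some infinite pairwise coprime set `C`
of integers greater than `1`. -/
def DZ (B : Set ℕ) : Set ℕ :=
  {d : ℕ | 0 < d ∧ ∃ C : Set ℕ, C.Infinite ∧ (∀ c ∈ C, 1 < c) ∧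
    (∀ c ∈ C, ∀ c' ∈ C, c ≠ c' → Nat.Coprime c c') ∧ ∀ c ∈ C, d * c ∈ B}

end BFreeZ

/-!
A `B`-free `n` lies in `Per(η, s)` exactly when no translate `n + ks` is a multiple of `B`.
If `d ∣ n` with `d ∈ D`, witnessed by `d·C ⊆ B`, then for every `s > 0` some `c ∈ C` is coprime
to `d s`, and the Chinese remainder theorem yields a translate divisible by `dc`.
Conversely, if `n` is aperiodic for every `lcm(Sᵢ)`, each failure gives `bᵢ ∈ B` with
`gcd(bᵢ, lcm Sᵢ) ∣ n`. Some value `d` of these gcds recurs infinitely often, and along a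
subsequence in which each earlier `bᵢ` lies in the later `Sⱼ` the `bᵢ` have pairwise gcd
exactly `d`; the cofactors `bᵢ / d` are then pairwise coprime, so `d ∈ D`.
-/

theorem Set.Infinite.exists_coprime_of_pairwise {C : Set ℕ} (hC : C.Infinite)
    (hcop : C.Pairwise Nat.Coprime) {m : ℕ} (hm : m ≠ 0) : ∃ c ∈ C, Nat.Coprime c m := by
  by_contra! h
  -- a prime factor shared by `c` and `m` determines `c`, since the elements of `C` are coprime
  let p : ℕ → ℕ := fun c => (Nat.gcd c m).minFac
  have hp_dvd : ∀ c, p c ∣ c ∧ p c ∣ m := fun c =>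
    ⟨(Nat.minFac_dvd _).trans (Nat.gcd_dvd_left _ _),
      (Nat.minFac_dvd _).trans (Nat.gcd_dvd_right _ _)⟩
  have hp_prime : ∀ c ∈ C, (p c).Prime := fun c hc => Nat.minFac_prime (h c hc)
  refine hC (Set.Finite.of_injOn (f := p) (t := (m.primeFactors : Set ℕ)) (fun c hc => ?_)
    (fun c hc c' hc' hcc' => ?_) m.primeFactors.finite_toSet)
  · exact Nat.mem_primeFactors.mpr ⟨hp_prime c hc, (hp_dvd c).2, hm⟩
  · by_contra hne
    have : p c ∣ Nat.gcd c c' := Nat.dvd_gcd (hp_dvd c).1 (hcc' ▸ (hp_dvd c').1)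
    rw [hcop hc hc' hne] at this
    exact (hp_prime c hc).not_dvd_one this

theorem Finite.exists_infinite_fiber_of_mapsTo {α β : Type*} [Infinite α] {f : α → β}
    {t : Set β} (ht : t.Finite) (hf : ∀ a, f a ∈ t) : ∃ b ∈ t, {a | f a = b}.Infinite := by
  have := ht.to_subtype
  obtain ⟨⟨b, hb⟩, hfib⟩ := Finite.exists_infinite_fiber (fun a => (⟨f a, hf a⟩ : t))
  refine ⟨b, hb, Set.infinite_coe_iff.mp ?_⟩
  convert hfib using 3
  ext a
  simp [Subtype.ext_iff]

namespace BFreeZ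

variable {B : Set ℕ}

theorem etaZ_eq_etaZ_iff {m n : ℤ} : etaZ B m = etaZ B n ↔ (m ∈ MBZ B ↔ n ∈ MBZ B) := by
  by_cases hm : m ∈ MBZ B <;> by_cases hn : n ∈ MBZ B <;> simp [etaZ, hm, hn]

theorem mem_perZ_etaZ_iff {n : ℤ} {s : ℕ} :
    n ∈ PerZ (etaZ B) s ↔ ∀ k : ℤ, (n + k * s ∈ MBZ B ↔ n ∈ MBZ B) :=
  forall_congr' fun _ => etaZ_eq_etaZ_iff

theorem mem_perZ_etaZ_of_dvd {n : ℤ} {s b : ℕ} (hb : b ∈ B) (hbn : (b : ℤ) ∣ n) (hbs : b ∣ s) :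
    n ∈ PerZ (etaZ B) s :=
  mem_perZ_etaZ_iff.mpr fun k => iff_of_true
    ⟨b, hb, dvd_add hbn (dvd_mul_of_dvd_right (Int.natCast_dvd_natCast.mpr hbs) k)⟩ ⟨b, hb, hbn⟩

theorem notMem_perZ_etaZ {n : ℤ} (hnD : n ∈ MBZ (DZ B)) (hnB : n ∉ MBZ B) {s : ℕ} (hs : 0 < s) :
    n ∉ PerZ (etaZ B) s := by
  obtain ⟨d, ⟨hd, C, hCinf, -, hCcop, hCB⟩, n', rfl⟩ := hnD
  obtain ⟨c, hcC, hcop⟩ := hCinf.exists_coprime_of_pairwise hCcop (m := d * s) (by positivity)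
  obtain ⟨u, v, huv⟩ := Nat.isCoprime_iff_coprime.mpr hcop.symm
  intro hper
  refine hnB ((mem_perZ_etaZ_iff.mp hper (-(d * n' * u * d))).mp ⟨d * c, hCB c hcC, n' * v, ?_⟩)
  push_cast at huv ⊢
  linear_combination (-(d * n')) * huv

theorem exists_gcd_dvd_of_notMem_perZ_etaZ {n : ℤ} {L : ℕ} (hnB : n ∉ MBZ B)
    (hn : n ∉ PerZ (etaZ B) L) : ∃ b ∈ B, ((Nat.gcd b L : ℕ) : ℤ) ∣ n := by
  obtain ⟨k, hk⟩ := not_forall.mp (mt mem_perZ_etaZ_iff.mpr hn)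
  obtain ⟨b, hb, hbk⟩ : n + k * L ∈ MBZ B := by_contra fun h => hk (iff_of_false h hnB)
  refine ⟨b, hb, (dvd_add_left ?_).mp
    ((Int.natCast_dvd_natCast.mpr (Nat.gcd_dvd_left b L)).trans hbk)⟩
  exact dvd_mul_of_dvd_right (Int.natCast_dvd_natCast.mpr (Nat.gcd_dvd_right b L)) k

theorem mem_DZ_of_gcd_eq {d : ℕ} (hd : 0 < d) {b : ℕ → ℕ} (hbB : ∀ m, b m ∈ B)
    (hgcd : ∀ l m, l < m → Nat.gcd (b l) (b m) = d) (hlt : ∀ m, d < b m) : d ∈ DZ B := by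
  have hdvd : ∀ m, d ∣ b m := fun m => hgcd m (m + 1) m.lt_succ_self ▸ Nat.gcd_dvd_left _ _
  choose c hc using hdvd
  have hc1 : ∀ m, 1 < c m := fun m => by
    by_contra! h
    have := hlt m
    rw [hc m] at this
    nlinarith
  have hcop : Pairwise fun l m => Nat.Coprime (c l) (c m) := by
    have key : ∀ l m, l < m → Nat.Coprime (c l) (c m) := fun l m hlm =>
      Nat.eq_of_mul_eq_mul_left hd <| by rw [← Nat.gcd_mul_left, ← hc, ← hc, hgcd l m hlm, mul_one]
    intro l m hlm
    rcases hlm.lt_or_gt with h | h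
    exacts [key l m h, (key m l h).symm]
  have hinj : Function.Injective c := fun l m h => by
    by_contra hlm
    have : Nat.Coprime (c l) (c m) := hcop hlm
    rw [h, Nat.coprime_self] at this
    exact (hc1 m).ne' this
  refine ⟨hd, Set.range c, Set.infinite_range_of_injective hinj, ?_, ?_, ?_⟩
  · rintro _ ⟨m, rfl⟩
    exact hc1 m
  · rintro _ ⟨l, rfl⟩ _ ⟨m, rfl⟩ hlm
    exact hcop (fun h => hlm (h ▸ rfl))
  · rintro _ ⟨m, rfl⟩
    exact hc m ▸ hbB m

theorem mem_MBZ_DZ_of_forall_notMem_perZ_etaZ (hB0 : 0 ∉ B) {S : ℕ → Finset ℕ}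
    (hmono : Monotone S) (hunion : ⋃ i, (S i : Set ℕ) = B) {n : ℤ} (hnB : n ∉ MBZ B)
    (hper : ∀ i, n ∉ PerZ (etaZ B) ((S i).lcm id)) : n ∈ MBZ (DZ B) := by
  choose b hbB hb using fun i => exists_gcd_dvd_of_notMem_perZ_etaZ hnB (hper i)
  have hn0 : n ≠ 0 := by
    rintro rfl
    exact hnB ⟨b 0, hbB 0, dvd_zero _⟩
  obtain ⟨d, hd, hI⟩ := Finite.exists_infinite_fiber_of_mapsTo n.natAbs.divisors.finite_toSet
    (f := fun i => Nat.gcd (b i) ((S i).lcm id))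
    fun i => Nat.mem_divisors.mpr ⟨Int.natCast_dvd.mp (hb i), Int.natAbs_ne_zero.mpr hn0⟩
  obtain ⟨φ, hφd, hφS⟩ := exists_seq_of_forall_finset_exists
    (fun i => Nat.gcd (b i) ((S i).lcm id) = d) (fun j j' => b j ∈ S j') fun s _ => by
      have hS : ∀ᶠ y in Filter.atTop, ∀ x ∈ s, b x ∈ S y := by
        refine (Filter.eventually_all_finset s).mpr fun x _ => ?_
        obtain ⟨i, hi⟩ := Set.mem_iUnion.mp (hunion ▸ hbB x)
        exact (Filter.eventually_ge_atTop i).mono fun j hj => hmono hj hi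
      exact ((Nat.frequently_atTop_iff_infinite.mpr hI).and_eventually hS).exists
  have hdb : ∀ m, d ∣ b (φ m) := fun m => hφd m ▸ Nat.gcd_dvd_left _ _
  have hdn : (d : ℤ) ∣ n := Int.natCast_dvd.mpr (Nat.dvd_of_mem_divisors hd)
  refine ⟨d, mem_DZ_of_gcd_eq (Nat.pos_of_mem_divisors hd) (b := b ∘ φ) (fun m => hbB _)
    (fun l m hlm => ?_) (fun m => ?_), hdn⟩
  · -- `b (φ l) ∣ lcm (S (φ m))`, so `gcd (b (φ l)) (b (φ m)) ∣ gcd (b (φ m)) (lcm (S (φ m))) = d`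
    refine Nat.dvd_antisymm (hφd m ▸ Nat.dvd_gcd (Nat.gcd_dvd_right _ _) ?_)
      (Nat.dvd_gcd (hdb l) (hdb m))
    exact (Nat.gcd_dvd_left _ _).trans (Finset.dvd_lcm (hφS l m hlm))
  · refine (Nat.le_of_dvd (Nat.pos_of_ne_zero fun h => hB0 (h ▸ hbB _)) (hdb m)).lt_of_ne ?_
    rintro h
    exact hnB ⟨b (φ m), hbB _, h ▸ hdn⟩

theorem compl_subset_iUnion_perZ_etaZ_lcm (hB0 : 0 ∉ B) {S : ℕ → Finset ℕ}
    (hmono : Monotone S) (hunion : ⋃ i, (S i : Set ℕ) = B) :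
    (MBZ (DZ B) ∩ (MBZ B)ᶜ)ᶜ ⊆ ⋃ i, PerZ (etaZ B) ((S i).lcm id) := by
  intro n hn
  by_cases hnB : n ∈ MBZ B
  · obtain ⟨b, hb, hbn⟩ := hnB
    obtain ⟨i, hi⟩ := Set.mem_iUnion.mp (hunion ▸ hb)
    exact Set.mem_iUnion_of_mem i (mem_perZ_etaZ_of_dvd hb hbn (Finset.dvd_lcm hi))
  · by_contra h
    exact hn ⟨mem_MBZ_DZ_of_forall_notMem_perZ_etaZ hB0 hmono hunion hnB
      fun i hi => h (Set.mem_iUnion_of_mem i hi), hnB⟩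

theorem nonperiodic_positions_one_dim_general
    (B : Set ℕ) (hB2 : ∀ b ∈ B, 2 ≤ b)
    (S : ℕ → Finset ℕ)
    (hmono : ∀ i, S i ⊆ S (i + 1)) (hunion : (⋃ i, (S i : Set ℕ)) = B) :
    (⋃ i, PerZ (etaZ B) ((S i).lcm id))ᶜ = MBZ (DZ B) ∩ (MBZ B)ᶜ ∧
    MBZ (DZ B) ∩ (MBZ B)ᶜ = (⋃ s ∈ {s : ℕ | 0 < s}, PerZ (etaZ B) s)ᶜ := by
  have hB0 : 0 ∉ B := fun h => absurd (hB2 0 h) (by norm_num)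
  have hL : ∀ i, 0 < (S i).lcm id := fun i => Nat.pos_of_ne_zero fun h => by
    obtain ⟨b, hb, hb0⟩ := Finset.lcm_eq_zero_iff.mp h
    exact hB0 (hb0 ▸ hunion ▸ Set.mem_iUnion_of_mem i hb)
  have hLs : ⋃ i, PerZ (etaZ B) ((S i).lcm id) ⊆ ⋃ s ∈ {s : ℕ | 0 < s}, PerZ (etaZ B) s :=
    Set.iUnion_subset fun i => Set.subset_biUnion_of_mem (u := fun s => PerZ (etaZ B) s) (hL i)
  have hsT : ⋃ s ∈ {s : ℕ | 0 < s}, PerZ (etaZ B) s ⊆ (MBZ (DZ B) ∩ (MBZ B)ᶜ)ᶜ :=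
    Set.iUnion₂_subset fun s hs n hn hT => notMem_perZ_etaZ hT.1 hT.2 hs hn
  have hTL := compl_subset_iUnion_perZ_etaZ_lcm hB0 (monotone_nat_of_le_succ hmono) hunion
  constructor
  · rw [(hLs.trans hsT).antisymm hTL, compl_compl]
  · rw [hsT.antisymm (hTL.trans hLs), compl_compl]

/-- **Proposition.** Non-periodic positions of `η` in dimension one:
`ℤ \ ⋃ᵢ Per(η, lcm(Sᵢ)) = M_D ∩ F_B = ℤ \ ⋃ₛ Per(η, s)`. -/
theorem nonperiodic_positions_one_dim
    (B : Set ℕ) (hB2 : ∀ b ∈ B, 2 ≤ b) (hprim : PrimitiveZ B)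
    (S : ℕ → Finset ℕ)
    (hne : ∀ i, (S i).Nonempty) (hsub : ∀ i, (S i : Set ℕ) ⊆ B)
    (hmono : ∀ i, S i ⊆ S (i + 1)) (hunion : (⋃ i, (S i : Set ℕ)) = B)
    (hsat : ∀ i, {n : ℕ | ∃ b ∈ B, n = Nat.gcd b ((S i).lcm id)} ∩ B = (S i : Set ℕ)) :
    (⋃ i, PerZ (etaZ B) ((S i).lcm id))ᶜ = MBZ (DZ B) ∩ (MBZ B)ᶜ ∧
    MBZ (DZ B) ∩ (MBZ B)ᶜ = (⋃ s ∈ {s : ℕ | 0 < s}, PerZ (etaZ B) s)ᶜ :=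
  nonperiodic_positions_one_dim_general B hB2 S hmono hunion

end BFreeZ
end
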